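/- arXiv:2304.08399 — 4 statements merged into one kernel-verified Lean document; each statement's English description precedes it below -/
import Mathlib

section
/- Let q : ℝⁿ → ℝ be a quadratic form such that q(y) > 0 whenever y is entrywise strictly positive. Then the following are equivalent: (1) for all y with all entries strictly positive and all x with non-negative entries, q(x,y)² ≥ q(x)q(y) with equality iff x is proportional to y; (2) for all y entrywise strictly positive and all x ∈ ℝⁿ, q(x,y)² ≥ q(x)q(y) with equality iff x is proportional to y; (3) for all y with q(y) > 0 and all x ∈ ℝⁿ, q(x,y)² ≥ q(x)q(y) with equality iff x is proportional to y; (4) q has signature (+,−,...,−). -/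
open QuadraticMap

/-- The symmetric bilinear form polarizing `Q`, i.e. `B x y` with `B x x = Q x`. -/
noncomputable def qbil {n : ℕ} (Q : QuadraticForm ℝ (Fin n → ℝ)) (x y : Fin n → ℝ) : ℝ :=
  QuadraticMap.polar Q x y / 2

/-- `Q` has signature `(+,−,...,−)`: it is equivalent to the quadratic form
`x₀² − x₁² − ⋯ − x_{n-1}²`. -/
def hasLorentzSignature {n : ℕ} (Q : QuadraticForm ℝ (Fin n → ℝ)) : Prop :=
  QuadraticMap.Equivalent Q
    (QuadraticMap.weightedSumSquares ℝ (fun i : Fin n => if (i : ℕ) = 0 then (1 : ℝ) else -1))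

/-!
Write `B` for the bilinear form of `Q`. When `Q y > 0`, splitting `x = t • y + z` with `B z y = 0`
gives `B x y ^ 2 - Q x * Q y = -(Q z * Q y)`, so the reverse Cauchy–Schwarz inequality at `y`, with
its equality case, says exactly that `Q` is negative definite on the orthogonal complement of `y`.
Both sides are unchanged when `x` is shifted by a multiple of `y`, and every `x` becomes
nonnegative after such a shift when `y` is positive; this gives (1) → (2).

A form that is negative definite on a hyperplane is not positive semidefinite on any plane. For a
Lorentzian form the hyperplane is `{x₀ = 0}`, and `y, z` with `Q y > 0`, `z ⟂ y`, `Q z ≥ 0` would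
span such a plane: this gives (4) → (3). Conversely, if `Q` is negative definite on the orthogonal
complement of the vector `1`, then `Q` is nondegenerate, and in a diagonalisation with weights
`±1` (Sylvester) two weights `+1` would span a positive plane, while `Q 1 > 0` forces at least
one: this gives (2) → (4).
-/

section Discriminant

variable {M : Type*} [AddCommGroup M] [Module ℝ M] (Q : QuadraticForm ℝ M)

lemma QuadraticMap.map_smul_add_smul_eq (a b : ℝ) (u v : M) :
    Q (a • u + b • v) = a ^ 2 * Q u + 2 * a * b * associated Q u v + b ^ 2 * Q v := by
  rw [← associated_eq_self_apply ℝ Q, ← associated_eq_self_apply ℝ Q u,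
    ← associated_eq_self_apply ℝ Q v]
  simp only [map_add, map_smul, LinearMap.add_apply, LinearMap.smul_apply, smul_eq_mul,
    associated_isSymm ℝ Q v u]
  ring

def ReverseCauchySchwarz (x y : M) : Prop :=
  associated Q x y ^ 2 ≥ Q x * Q y ∧ (associated Q x y ^ 2 = Q x * Q y ↔ ∃ c : ℝ, x = c • y)

lemma reverseCauchySchwarz_iff_discr (x y : M) :
    ReverseCauchySchwarz Q x y ↔ 0 ≤ associated Q x y ^ 2 - Q x * Q y ∧
      (associated Q x y ^ 2 - Q x * Q y = 0 ↔ ∃ c : ℝ, x = c • y) := by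
  rw [ReverseCauchySchwarz, ge_iff_le, sub_nonneg, sub_eq_zero]

lemma reverseCauchySchwarz_add_smul_iff (x y : M) (s : ℝ) :
    ReverseCauchySchwarz Q (x + s • y) y ↔ ReverseCauchySchwarz Q x y := by
  have hdiscr : associated Q (x + s • y) y ^ 2 - Q (x + s • y) * Q y =
      associated Q x y ^ 2 - Q x * Q y := by
    have hQ := map_smul_add_smul_eq Q 1 s x y
    rw [one_smul] at hQ
    simp only [hQ, map_add, map_smul, LinearMap.add_apply, LinearMap.smul_apply, smul_eq_mul,
      associated_eq_self_apply]
    ring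
  have hline : (∃ c : ℝ, x + s • y = c • y) ↔ ∃ c : ℝ, x = c • y :=
    ⟨fun ⟨c, h⟩ => ⟨c - s, by rw [sub_smul, ← h, add_sub_cancel_right]⟩,
      fun ⟨c, h⟩ => ⟨c + s, by rw [h, add_smul]⟩⟩
  rw [reverseCauchySchwarz_iff_discr, reverseCauchySchwarz_iff_discr, hdiscr, hline]

variable {Q} in
lemma eq_zero_of_associated_eq_zero_of_eq_smul {y z : M} (hy : Q y ≠ 0)
    (hz : associated Q z y = 0) {c : ℝ} (hc : z = c • y) : z = 0 := by
  subst hc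
  rw [map_smul, LinearMap.smul_apply, associated_eq_self_apply, smul_eq_mul, mul_eq_zero] at hz
  rw [hz.resolve_right hy, zero_smul]

lemma forall_reverseCauchySchwarz_iff {y : M} (hy : 0 < Q y) :
    (∀ x, ReverseCauchySchwarz Q x y) ↔ ∀ z, associated Q z y = 0 → z ≠ 0 → Q z < 0 := by
  constructor
  · intro h z hzy hz
    obtain ⟨hle, heq⟩ := h z
    rw [hzy] at hle heq
    refine lt_of_le_of_ne (by nlinarith) fun hQz => hz ?_
    obtain ⟨c, hc⟩ := heq.1 (by rw [hQz]; ring)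
    exact eq_zero_of_associated_eq_zero_of_eq_smul hy.ne' hzy hc
  · intro h x
    set t := associated Q x y / Q y
    have hzy : associated Q (x - t • y) y = 0 := by
      simp only [map_sub, map_smul, LinearMap.sub_apply, LinearMap.smul_apply, smul_eq_mul,
        associated_eq_self_apply, t]
      field_simp
      ring
    have key := (reverseCauchySchwarz_add_smul_iff Q (x - t • y) y t).2
    rw [sub_add_cancel] at key
    refine key ?_
    rw [reverseCauchySchwarz_iff_discr, hzy]
    by_cases hz : x - t • y = 0
    · rw [hz, map_zero]
      exact ⟨by norm_num, iff_of_true (by ring) ⟨0, (zero_smul ℝ y).symm⟩⟩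
    · have hQz := h _ hzy hz
      refine ⟨by nlinarith, ⟨fun h0 => absurd h0 (by nlinarith), fun ⟨c, hc⟩ => ?_⟩⟩
      exact absurd (eq_zero_of_associated_eq_zero_of_eq_smul hy.ne' hzy hc) hz

end Discriminant

section NegativeHyperplane

variable {M : Type*} [AddCommGroup M] [Module ℝ M] (Q : QuadraticForm ℝ M) (φ : M →ₗ[ℝ] ℝ)

lemma not_linearIndependent_of_forall_nonneg (hneg : ∀ z, φ z = 0 → z ≠ 0 → Q z < 0)
    {u v : M} (huv : ∀ a b : ℝ, 0 ≤ Q (a • u + b • v)) : ¬LinearIndependent ℝ ![u, v] := by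
  rw [LinearIndependent.pair_iff]
  intro hind
  obtain ⟨a, b, hab, hφ⟩ : ∃ a b : ℝ, (a ≠ 0 ∨ b ≠ 0) ∧ a * φ u + b * φ v = 0 := by
    by_cases hu : φ u = 0
    · exact ⟨1, 0, Or.inl one_ne_zero, by simp [hu]⟩
    · exact ⟨φ v, -φ u, Or.inr (neg_ne_zero.2 hu), by ring⟩
  have hw : a • u + b • v ≠ 0 := fun h => by
    obtain ⟨rfl, rfl⟩ := hind a b h
    simp at hab
  exact (hneg _ (by simpa using hφ) hw).not_ge (huv a b)

lemma neg_of_associated_eq_zero_of_neg_on_ker (hneg : ∀ z, φ z = 0 → z ≠ 0 → Q z < 0)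
    {y : M} (hy : 0 < Q y) : ∀ z, associated Q z y = 0 → z ≠ 0 → Q z < 0 := by
  intro z hzy hz
  by_contra! hQz
  refine not_linearIndependent_of_forall_nonneg Q φ hneg (u := y) (v := z) (fun a b => ?_) ?_
  · rw [map_smul_add_smul_eq, associated_isSymm, hzy, mul_zero, add_zero]
    exact add_nonneg (mul_nonneg (sq_nonneg a) hy.le) (mul_nonneg (sq_nonneg b) hQz)
  · rw [LinearIndependent.pair_iff]
    intro a b hab
    have ha : a = 0 := by
      simpa [hzy, associated_eq_self_apply, hy.ne'] using congrArg (associated Q · y) hab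
    subst ha
    simpa [hz] using hab

lemma separatingLeft_associated_of_neg_of_associated_eq_zero {y : M}
    (hneg : ∀ z, associated Q z y = 0 → z ≠ 0 → Q z < 0) : (associated Q).SeparatingLeft := by
  intro x hx
  by_contra hx0
  have hQx := hneg x (hx y) hx0
  rw [← associated_eq_self_apply ℝ Q x, hx x] at hQx
  exact lt_irrefl _ hQx

end NegativeHyperplane

section WeightedSumSquares

variable {ι κ R : Type*} [Fintype ι] [Fintype κ] [CommSemiring R]

lemma weightedSumSquares_equivalent_comp (w : κ → R) (σ : ι ≃ κ) :
    Equivalent (weightedSumSquares R w) (weightedSumSquares R (w ∘ σ)) := by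
  refine ⟨{ toLinearEquiv := LinearEquiv.funCongrLeft R R σ, map_app' := fun v => ?_ }⟩
  simp only [weightedSumSquares_apply, Function.comp_apply]
  exact Fintype.sum_equiv σ _ _ fun i => rfl

lemma weightedSumSquares_single_add_single [DecidableEq ι] (w : ι → R) {i j : ι} (hij : i ≠ j)
    (a b : R) :
    weightedSumSquares R w (Pi.single i a + Pi.single j b) = w i * a ^ 2 + w j * b ^ 2 := by
  rw [weightedSumSquares_apply, Fintype.sum_eq_add i j hij]
  · simp [hij, hij.symm, _root_.sq]
  · intro k ⟨hki, hkj⟩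
    simp [hki, hkj]

end WeightedSumSquares

section Weights

variable {M ι : Type*} [AddCommGroup M] [Module ℝ M] [Fintype ι] {Q : QuadraticForm ℝ M}
  {w : ι → ℝ}

lemma exists_pos_weight (f : Q.IsometryEquiv (weightedSumSquares ℝ w)) {y : M} (hy : 0 < Q y) :
    ∃ i, 0 < w i := by
  by_contra! hw
  have hQy : Q y ≤ 0 := by
    rw [← f.map_app, weightedSumSquares_apply]
    exact Finset.sum_nonpos fun i _ => smul_nonpos_of_nonpos_of_nonneg (hw i) (mul_self_nonneg _)
  exact hQy.not_gt hy

lemma eq_of_pos_weight_of_pos_weight (f : Q.IsometryEquiv (weightedSumSquares ℝ w))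
    (φ : M →ₗ[ℝ] ℝ) (hneg : ∀ z, φ z = 0 → z ≠ 0 → Q z < 0) {i j : ι} (hi : 0 < w i)
    (hj : 0 < w j) : i = j := by
  classical
  by_contra hij
  have hf (a b : ℝ) : f (a • f.symm (Pi.single i 1) + b • f.symm (Pi.single j 1)) =
      Pi.single i a + Pi.single j b := by
    simp [← Pi.single_smul']
  refine not_linearIndependent_of_forall_nonneg Q φ hneg (u := f.symm (Pi.single i 1))
    (v := f.symm (Pi.single j 1)) (fun a b => ?_) ?_
  · rw [← f.map_app, hf, weightedSumSquares_single_add_single w hij]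
    positivity
  · rw [LinearIndependent.pair_iff]
    intro a b hab
    have hab' := congrArg f hab
    rw [hf, map_zero] at hab'
    exact ⟨by simpa [hij] using congrFun hab' i, by simpa [Ne.symm hij] using congrFun hab' j⟩

end Weights

section Lorentz

variable {n : ℕ}

lemma weightedSumSquares_lorentz_neg {v : Fin n → ℝ} (i₀ : Fin n) (hi₀ : (i₀ : ℕ) = 0)
    (hv₀ : v i₀ = 0) (hv : v ≠ 0) :
    weightedSumSquares ℝ (fun i : Fin n => if (i : ℕ) = 0 then (1 : ℝ) else -1) v < 0 := by
  have hterm (i : Fin n) : (if (i : ℕ) = 0 then (1 : ℝ) else -1) • (v i * v i) = -(v i * v i) := by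
    split_ifs with hi
    · simp [Fin.ext (hi.trans hi₀.symm), hv₀]
    · simp
  rw [weightedSumSquares_apply, Finset.sum_congr rfl fun i _ => hterm i, Finset.sum_neg_distrib,
    neg_neg_iff_pos]
  obtain ⟨i, hi⟩ := Function.ne_iff.mp hv
  exact Finset.sum_pos' (fun j _ => mul_self_nonneg _) ⟨i, Finset.mem_univ _, mul_self_pos.2 hi⟩

lemma weightedSumSquares_equivalent_lorentz {w : Fin n → ℝ} (hw : ∀ i, w i = -1 ∨ w i = 1)
    {i₀ : Fin n} (hi₀ : ∀ j, w j = 1 ↔ j = i₀) :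
    Equivalent (weightedSumSquares ℝ w)
      (weightedSumSquares ℝ (fun i : Fin n => if (i : ℕ) = 0 then (1 : ℝ) else -1)) := by
  let k₀ : Fin n := ⟨0, i₀.pos⟩
  have hweights : w ∘ Equiv.swap k₀ i₀ = fun i : Fin n => if (i : ℕ) = 0 then 1 else -1 := by
    funext k
    by_cases hk : (k : ℕ) = 0
    · obtain rfl : k = k₀ := Fin.ext hk
      rw [Function.comp_apply, Equiv.swap_apply_left, if_pos hk]
      exact (hi₀ i₀).2 rfl
    · rw [if_neg hk]
      refine (hw _).resolve_right fun h => hk ?_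
      have hk₀ : Equiv.swap k₀ i₀ k = i₀ := (hi₀ _).1 h
      rw [Equiv.swap_apply_eq_iff, Equiv.swap_apply_right] at hk₀
      exact congrArg Fin.val hk₀
  exact hweights ▸ weightedSumSquares_equivalent_comp w (Equiv.swap k₀ i₀)

variable {Q : QuadraticForm ℝ (Fin n → ℝ)}

lemma exists_weights_eq_neg_one_or_one (hQ : (associated Q).SeparatingLeft) :
    ∃ w : Fin n → ℝ, (∀ i, w i = -1 ∨ w i = 1) ∧ Equivalent Q (weightedSumSquares ℝ w) := by
  have h := Q.equivalent_one_neg_one_weighted_sum_squared hQ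
  rwa [Module.finrank_fin_fun] at h

lemma hasLorentzSignature_of_neg_of_associated_eq_zero {y : Fin n → ℝ} (hy : 0 < Q y)
    (hneg : ∀ z, associated Q z y = 0 → z ≠ 0 → Q z < 0) : hasLorentzSignature Q := by
  obtain ⟨w, hw, ⟨f⟩⟩ := exists_weights_eq_neg_one_or_one
    (separatingLeft_associated_of_neg_of_associated_eq_zero Q hneg)
  obtain ⟨i₀, hi₀⟩ := exists_pos_weight f hy
  have hone_iff_pos (j : Fin n) : w j = 1 ↔ 0 < w j := by rcases hw j with h | h <;> norm_num [h]
  have huniq (j : Fin n) : w j = 1 ↔ j = i₀ :=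
    ⟨fun h => eq_of_pos_weight_of_pos_weight f ((associated Q).flip y)
      (fun z hz => hneg z (by simpa using hz)) ((hone_iff_pos j).1 h) hi₀,
      by rintro rfl; exact (hone_iff_pos _).2 hi₀⟩
  exact Equivalent.trans ⟨f⟩ (weightedSumSquares_equivalent_lorentz hw huniq)

lemma neg_of_associated_eq_zero_of_hasLorentzSignature (hQ : hasLorentzSignature Q)
    {y : Fin n → ℝ} (hy : 0 < Q y) : ∀ z, associated Q z y = 0 → z ≠ 0 → Q z < 0 := by
  obtain ⟨f⟩ := hQ
  have hy₀ : y ≠ 0 := by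
    rintro rfl
    simp at hy
  obtain ⟨i, -⟩ := Function.ne_iff.mp hy₀
  let i₀ : Fin n := ⟨0, i.pos⟩
  refine neg_of_associated_eq_zero_of_neg_on_ker Q
    ((LinearMap.proj i₀).comp f.toLinearEquiv.toLinearMap) (fun z hz hz0 => ?_) hy
  rw [← f.map_app z]
  exact weightedSumSquares_lorentz_neg i₀ rfl hz (by simpa using hz0)

lemma qbil_eq_associated (x y : Fin n → ℝ) : qbil Q x y = associated Q x y := by
  have h : (2 • associated Q) x y = polarBilin Q x y := by rw [two_nsmul_associated]
  simp only [LinearMap.smul_apply, polarBilin_apply_apply, nsmul_eq_mul] at h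
  rw [qbil, ← h]
  push_cast
  ring

end Lorentz

lemma exists_nonneg_add_smul {ι : Type*} [Finite ι] (x : ι → ℝ) {y : ι → ℝ} (hy : ∀ i, 0 < y i) :
    ∃ s : ℝ, ∀ i, 0 ≤ (x + s • y) i := by
  obtain ⟨s, hs⟩ := Finite.exists_le fun i => -x i / y i
  refine ⟨s, fun i => ?_⟩
  have := (div_le_iff₀ (hy i)).1 (hs i)
  simp only [Pi.add_apply, Pi.smul_apply, smul_eq_mul]
  linarith

/-- For a quadratic form `q` on ℝⁿ with `q(y) > 0` for entrywise positive `y`, the four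
conditions (1)–(4) of Lemma `hodge` are equivalent. -/
theorem stmt_2 {n : ℕ} (Q : QuadraticForm ℝ (Fin n → ℝ))
    (hpos : ∀ y : Fin n → ℝ, (∀ i, 0 < y i) → 0 < Q y) :
    List.TFAE
      [ (∀ y : Fin n → ℝ, (∀ i, 0 < y i) → ∀ x : Fin n → ℝ, (∀ i, 0 ≤ x i) →
          (qbil Q x y) ^ 2 ≥ Q x * Q y ∧
            ((qbil Q x y) ^ 2 = Q x * Q y ↔ ∃ c : ℝ, x = c • y)),
        (∀ y : Fin n → ℝ, (∀ i, 0 < y i) → ∀ x : Fin n → ℝ,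
          (qbil Q x y) ^ 2 ≥ Q x * Q y ∧
            ((qbil Q x y) ^ 2 = Q x * Q y ↔ ∃ c : ℝ, x = c • y)),
        (∀ y : Fin n → ℝ, 0 < Q y → ∀ x : Fin n → ℝ,
          (qbil Q x y) ^ 2 ≥ Q x * Q y ∧
            ((qbil Q x y) ^ 2 = Q x * Q y ↔ ∃ c : ℝ, x = c • y)),
        hasLorentzSignature Q ] := by
  simp only [qbil_eq_associated]
  have hone : ∀ i : Fin n, (0 : ℝ) < (1 : Fin n → ℝ) i := fun _ => one_pos
  tfae_have 1 → 2 := fun h y hy x => by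
    obtain ⟨s, hs⟩ := exists_nonneg_add_smul x hy
    exact (reverseCauchySchwarz_add_smul_iff Q x y s).1 (h y hy _ hs)
  tfae_have 2 → 1 := fun h y hy x _ => h y hy x
  tfae_have 3 → 2 := fun h y hy => h y (hpos y hy)
  tfae_have 4 → 3 := fun h y hy =>
    (forall_reverseCauchySchwarz_iff Q hy).2
      (neg_of_associated_eq_zero_of_hasLorentzSignature h hy)
  tfae_have 2 → 4 := fun h =>
    hasLorentzSignature_of_neg_of_associated_eq_zero (hpos 1 hone)
      ((forall_reverseCauchySchwarz_iff Q (hpos 1 hone)).1 (h 1 hone))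
  tfae_finish
end

section
/- Let ∂ = Σ_α c_α ∂^α be a non-zero homogeneous constant-coefficient differential operator of degree d in n variables. Then for every m ≥ d, the induced linear map from the space of homogeneous real polynomials of degree m in n variables to the space of homogeneous polynomials of degree m−d is surjective. -/
/-!
Write `H_k` for the finite-dimensional space of homogeneous polynomials of degree `k`.
Multiplication by `s` maps `H_{m-d}` into `H_m` and `s(∂)` maps `H_m` back into `H_{m-d}`.
The composite `x ↦ s(∂)(s x)` is injective: `p ↦ p(∂)` is multiplicative, so for
`p = s x ≠ 0` we get `p(∂) p = x(∂)(s(∂)(s x))`, while the constant term of `p(∂) p` is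
`∑ α! p_α² > 0` (the Fischer inner product of `p` with itself). An injective endomorphism of a
finite-dimensional space is surjective, so every `g ∈ H_{m-d}` is `s(∂) f` with `f = s x ∈ H_m`.
-/

open MvPolynomial

variable {n : ℕ}

/-- The iterated partial derivative `∂^α = ∂₁^{α 1} ⋯ ∂ₙ^{α n}`. -/
noncomputable def pderivPow (α : Fin n →₀ ℕ) (f : MvPolynomial (Fin n) ℝ) :
    MvPolynomial (Fin n) ℝ :=
  (List.finRange n).foldr (fun i g => (pderiv i)^[α i] g) f

/-- The constant-coefficient differential operator `s(∂_{x_1},…,∂_{x_n})`. -/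
noncomputable def diffOp (s f : MvPolynomial (Fin n) ℝ) : MvPolynomial (Fin n) ℝ :=
  ∑ α ∈ s.support, s.coeff α • pderivPow α f

section

variable {σ R : Type*} [CommSemiring R]

theorem iterate_pderiv_monomial (i : σ) (k : ℕ) (β : σ →₀ ℕ) (c : R) :
    (pderiv i)^[k] (monomial β c) =
      monomial (β - Finsupp.single i k) ((β i).descFactorial k * c) := by
  induction k with
  | zero => simp
  | succ k ih =>
    rw [Function.iterate_succ_apply', ih, pderiv_monomial, tsub_tsub, ← Finsupp.single_add,
      Finsupp.tsub_apply, Finsupp.single_eq_same, Nat.descFactorial_succ]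
    push_cast
    ring_nf

theorem foldr_iterate_pderiv_monomial [DecidableEq σ] (α β : σ →₀ ℕ) (c : R) {l : List σ}
    (hl : l.Nodup) :
    l.foldr (fun i g => (pderiv i)^[α i] g) (monomial β c) =
      monomial (β - ∑ i ∈ l.toFinset, Finsupp.single i (α i))
        ((∏ i ∈ l.toFinset, (β i).descFactorial (α i) : ℕ) * c) := by
  induction l with
  | nil => simp
  | cons i l ih =>
    obtain ⟨hi, hl⟩ := List.nodup_cons.mp hl
    have hi' : i ∉ l.toFinset := by simpa using hi
    have hβi : (β - ∑ j ∈ l.toFinset, Finsupp.single j (α j)) i = β i := by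
      simp [Finsupp.single_apply, hi']
    rw [List.foldr_cons, ih hl, iterate_pderiv_monomial, hβi, List.toFinset_cons,
      Finset.sum_insert hi', Finset.prod_insert hi', tsub_tsub, add_comm]
    push_cast
    ring_nf

theorem prod_descFactorial_eq_zero_of_not_le [Fintype σ] {α β : σ →₀ ℕ} (h : ¬α ≤ β) :
    ∏ i, (β i).descFactorial (α i) = 0 := by
  obtain ⟨i, hi⟩ : ∃ i, β i < α i := by simpa [Finsupp.le_def] using h
  exact Finset.prod_eq_zero (Finset.mem_univ i) (Nat.descFactorial_eq_zero_iff_lt.mpr hi)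

theorem MvPolynomial.IsHomogeneous.iterate_pderiv {φ : MvPolynomial σ R} {m : ℕ}
    (h : φ.IsHomogeneous m) (i : σ) (k : ℕ) : ((pderiv i)^[k] φ).IsHomogeneous (m - k) := by
  induction k with
  | zero => simpa
  | succ k ih => simpa [Function.iterate_succ_apply', Nat.sub_sub] using ih.pderiv

end

theorem pderivPow_monomial (α β : Fin n →₀ ℕ) (c : ℝ) :
    pderivPow α (monomial β c) =
      monomial (β - α) ((∏ i, (β i).descFactorial (α i) : ℕ) * c) := by
  rw [pderivPow, foldr_iterate_pderiv_monomial α β c (List.nodup_finRange n),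
    List.toFinset_finRange, Finsupp.univ_sum_single]

theorem isHomogeneous_pderivPow {f : MvPolynomial (Fin n) ℝ} {m : ℕ} (hf : f.IsHomogeneous m)
    (α : Fin n →₀ ℕ) : (pderivPow α f).IsHomogeneous (m - α.degree) := by
  have key : ∀ l : List (Fin n),
      (l.foldr (fun i g => (pderiv i)^[α i] g) f).IsHomogeneous (m - (l.map α).sum) := by
    intro l
    induction l with
    | nil => simpa
    | cons i l ih => simpa [Nat.sub_sub, add_comm] using ih.iterate_pderiv i (α i)
  simpa [pderivPow, Finsupp.degree_eq_sum, Fin.sum_univ_def] using key (List.finRange n)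

noncomputable def lpderivPow (α : Fin n →₀ ℕ) : Module.End ℝ (MvPolynomial (Fin n) ℝ) :=
  (List.finRange n).foldr (fun i L => (pderiv i).toLinearMap ^ α i * L) 1

theorem lpderivPow_apply (α : Fin n →₀ ℕ) (f : MvPolynomial (Fin n) ℝ) :
    lpderivPow α f = pderivPow α f := by
  rw [lpderivPow, pderivPow]
  induction List.finRange n with
  | nil => rfl
  | cons i l ih =>
    rw [List.foldr_cons, List.foldr_cons, Module.End.mul_apply, Module.End.pow_apply, ih]
    rfl

theorem lpderivPow_add (α β : Fin n →₀ ℕ) :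
    lpderivPow (α + β) = lpderivPow α * lpderivPow β := by
  refine linearMap_ext fun γ => LinearMap.ext_ring ?_
  simp only [LinearMap.comp_apply, Module.End.mul_apply, lpderivPow_apply, pderivPow_monomial]
  rw [tsub_tsub, add_comm β α]
  congr 1
  rw [mul_one, mul_one, ← Nat.cast_mul, ← Finset.prod_mul_distrib]
  congr 1
  refine Finset.prod_congr rfl fun i _ => ?_
  rw [Finsupp.tsub_apply, Finsupp.add_apply, ← Nat.descFactorial_mul_descFactorial
    (Nat.le_add_left (β i) (α i)), Nat.add_sub_cancel]

theorem coeff_zero_pderivPow (α : Fin n →₀ ℕ) (f : MvPolynomial (Fin n) ℝ) :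
    coeff 0 (pderivPow α f) = (∏ i, (α i).factorial : ℕ) * f.coeff α := by
  have key : lcoeff ℝ 0 ∘ₗ lpderivPow α = ((∏ i, (α i).factorial : ℕ) : ℝ) • lcoeff ℝ α := by
    refine linearMap_ext fun β => LinearMap.ext_ring ?_
    simp only [LinearMap.comp_apply, LinearMap.smul_apply, lcoeff_apply, lpderivPow_apply,
      pderivPow_monomial, coeff_monomial]
    rcases eq_or_ne β α with rfl | hne
    · simp [Nat.descFactorial_self]
    · have hle : β - α = 0 → ¬α ≤ β := fun h hαβ =>
        hne (le_antisymm (tsub_eq_zero_iff_le.mp h) hαβ)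
      split_ifs with h
      · simp [prod_descFactorial_eq_zero_of_not_le (hle h)]
      · simp
  simpa [lpderivPow_apply] using LinearMap.congr_fun key f

theorem isHomogeneous_diffOp {s f : MvPolynomial (Fin n) ℝ} {d m : ℕ}
    (hs : s.IsHomogeneous d) (hf : f.IsHomogeneous m) :
    (diffOp s f).IsHomogeneous (m - d) := by
  rw [← mem_homogeneousSubmodule, diffOp]
  refine Submodule.sum_mem _ fun α hα => Submodule.smul_mem _ _ ?_
  have hα : α.degree = d := by
    rw [Finsupp.degree_eq_weight_one]
    exact hs (mem_support_iff.mp hα)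
  exact hα ▸ isHomogeneous_pderivPow hf α

theorem coeff_zero_diffOp_self_pos {p : MvPolynomial (Fin n) ℝ} (hp : p ≠ 0) :
    0 < coeff 0 (diffOp p p) := by
  rw [diffOp, coeff_sum]
  refine Finset.sum_pos (fun α hα => ?_) (support_nonempty.mpr hp)
  have hα : p.coeff α ≠ 0 := mem_support_iff.mp hα
  rw [coeff_smul, coeff_zero_pderivPow, smul_eq_mul, mul_left_comm]
  exact mul_pos (by positivity) (mul_self_pos.mpr hα)

noncomputable def ldiffOp (s : MvPolynomial (Fin n) ℝ) : Module.End ℝ (MvPolynomial (Fin n) ℝ) :=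
  (AddMonoidAlgebra.coeff s).sum fun α c => c • lpderivPow α

theorem ldiffOp_apply (s f : MvPolynomial (Fin n) ℝ) : ldiffOp s f = diffOp s f := by
  simp only [ldiffOp, diffOp, Finsupp.sum, LinearMap.coe_sum, Finset.sum_apply,
    LinearMap.smul_apply, lpderivPow_apply]
  rfl

theorem ldiffOp_monomial (α : Fin n →₀ ℕ) (c : ℝ) :
    ldiffOp (monomial α c) = c • lpderivPow α :=
  sum_monomial_eq (zero_smul ℝ _)

theorem ldiffOp_add (s t : MvPolynomial (Fin n) ℝ) :
    ldiffOp (s + t) = ldiffOp s + ldiffOp t :=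
  Finsupp.sum_add_index' (fun _ => zero_smul ℝ _) fun _ _ _ => add_smul _ _ _

theorem ldiffOp_mul (s t : MvPolynomial (Fin n) ℝ) :
    ldiffOp (s * t) = ldiffOp s * ldiffOp t := by
  induction s using MvPolynomial.induction_on' with
  | add p q hp hq => rw [add_mul, ldiffOp_add, ldiffOp_add, hp, hq, add_mul]
  | monomial α a =>
    induction t using MvPolynomial.induction_on' with
    | add p q hp hq => rw [mul_add, ldiffOp_add, ldiffOp_add, hp, hq, mul_add]
    | monomial β b =>
      rw [monomial_mul, ldiffOp_monomial, ldiffOp_monomial, ldiffOp_monomial, lpderivPow_add,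
        smul_mul_smul_comm]

theorem diffOp_mul_ne_zero {s x : MvPolynomial (Fin n) ℝ} (hs : s ≠ 0) (hx : x ≠ 0) :
    diffOp s (s * x) ≠ 0 := by
  intro h
  have hmul : ldiffOp (s * x) = ldiffOp x * ldiffOp s := mul_comm x s ▸ ldiffOp_mul x s
  have hpos := coeff_zero_diffOp_self_pos (mul_ne_zero hs hx)
  rw [← ldiffOp_apply, hmul, Module.End.mul_apply, ldiffOp_apply s, h, map_zero,
    coeff_zero] at hpos
  exact lt_irrefl 0 hpos

/-- A non-zero homogeneous constant-coefficient differential operator of degree `d`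
maps homogeneous polynomials of degree `m ≥ d` onto homogeneous polynomials of
degree `m − d` surjectively. -/
theorem stmt_6 (s : MvPolynomial (Fin n) ℝ) (d m : ℕ)
    (hs : s ≠ 0) (hhom : s.IsHomogeneous d) (hm : d ≤ m) :
    ∀ g : MvPolynomial (Fin n) ℝ, g.IsHomogeneous (m - d) →
      ∃ f : MvPolynomial (Fin n) ℝ, f.IsHomogeneous m ∧ diffOp s f = g := by
  intro g hg
  have hmul : ∀ x ∈ homogeneousSubmodule (Fin n) ℝ (m - d),
      LinearMap.mulLeft ℝ s x ∈ homogeneousSubmodule (Fin n) ℝ m := fun x hx => by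
    simpa [mem_homogeneousSubmodule, Nat.add_sub_cancel' hm] using hhom.mul hx
  have hdiff : ∀ f ∈ homogeneousSubmodule (Fin n) ℝ m,
      ldiffOp s f ∈ homogeneousSubmodule (Fin n) ℝ (m - d) := fun f hf => by
    simpa [ldiffOp_apply] using isHomogeneous_diffOp hhom hf
  let S := (LinearMap.mulLeft ℝ s).restrict hmul
  let T := (ldiffOp s).restrict hdiff
  have : FiniteDimensional ℝ (homogeneousSubmodule (Fin n) ℝ (m - d)) :=
    Module.Finite.iff_fg.mpr (homogeneousSubmodule_fg _ _ _)
  have hinj : Function.Injective (T ∘ₗ S) := by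
    refine (injective_iff_map_eq_zero _).mpr fun x hx => ?_
    rw [← Submodule.coe_eq_zero]
    by_contra hx0
    refine diffOp_mul_ne_zero hs hx0 ?_
    simpa [← ldiffOp_apply, T, S] using congrArg Subtype.val hx
  obtain ⟨x, hx⟩ := LinearMap.injective_iff_surjective.mp hinj ⟨g, hg⟩
  exact ⟨s * x, hmul x x.2, by simpa [← ldiffOp_apply, T, S] using congrArg Subtype.val hx⟩
end

section
/- Let s ∈ ℝ[x_1,...,x_n] be homogeneous of degree d, and let ∂_s = s(∂_{x_1},...,∂_{x_n}). Define s^{(j)} by s(x_1+u,...,x_n+u) = Σ_{j=0}^d s^{(j)}(x_1,...,x_n) u^j. Then for any t_1,...,t_n ∈ ℝ and any 0 ≤ j ≤ d, ∂_s applied to the polynomial (Σ_i x_i)^j (Σ_i t_i x_i)^{d−j} equals the constant j!·(d−j)!·s^{(j)}(t_1,...,t_n). -/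
open MvPolynomial

variable {n : ℕ}

/-- The value `s^{(j)}(t₁,…,tₙ)` of the `j`-th derived polynomial of `s`, defined by
`s(t₁+u,…,tₙ+u) = Σ_j s^{(j)}(t) u^j`. -/
noncomputable def derivedAt (t : Fin n → ℝ) (s : MvPolynomial (Fin n) ℝ) (j : ℕ) : ℝ :=
  (MvPolynomial.aeval (fun i : Fin n => Polynomial.C (t i) + Polynomial.X) s).coeff j

lemma descFactorial_add' (m a b : ℕ) :
    m.descFactorial (a + b) = m.descFactorial b * (m - b).descFactorial a := by
  induction a with
  | zero => simp
  | succ a ih =>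
      rw [show a + 1 + b = (a + b) + 1 from by ring, Nat.descFactorial_succ, ih,
        Nat.descFactorial_succ, Nat.sub_sub, Nat.add_comm b a]
      ring

lemma descFactorial_mul_succ (m k : ℕ) :
    m.descFactorial (k + 1) = m * (m - 1).descFactorial k := by
  cases m with
  | zero => simp
  | succ m => rw [Nat.succ_descFactorial_succ]; simp

lemma iterate_pderiv_smul (i : Fin n) (k : ℕ) (a : ℝ) (f : MvPolynomial (Fin n) ℝ) :
    (pderiv i)^[k] (a • f) = a • (pderiv i)^[k] f := by
  induction k generalizing f with
  | zero => rfl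
  | succ k ih =>
      rw [Function.iterate_succ_apply, Function.iterate_succ_apply,
        Derivation.map_smul, ih]

lemma iterate_pderiv_add (i : Fin n) (k : ℕ) (f g : MvPolynomial (Fin n) ℝ) :
    (pderiv i)^[k] (f + g) = (pderiv i)^[k] f + (pderiv i)^[k] g := by
  induction k generalizing f g with
  | zero => rfl
  | succ k ih =>
      rw [Function.iterate_succ_apply, Function.iterate_succ_apply,
        Function.iterate_succ_apply, map_add, ih]

lemma iterate_pderiv_pow (i : Fin n) (L : MvPolynomial (Fin n) ℝ) (ci : ℝ)
    (hL : pderiv i L = C ci) (k m : ℕ) :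
    (pderiv i)^[k] (L ^ m) = (ci ^ k * (m.descFactorial k : ℝ)) • L ^ (m - k) := by
  induction k generalizing m with
  | zero => simp
  | succ k ih =>
      have h1 : pderiv i (L ^ m) = ((m : ℝ) * ci) • L ^ (m - 1) := by
        rw [Derivation.leibniz_pow _ _ _, hL, smul_eq_mul, nsmul_eq_mul,
          smul_eq_C_mul, C_mul, map_natCast]
        ring
      rw [Function.iterate_succ_apply, h1, iterate_pderiv_smul, ih, smul_smul,
        Nat.sub_sub, Nat.add_comm 1 k, descFactorial_mul_succ m k]
      congr 1
      push_cast
      ring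

lemma foldr_pderiv_pow (α : Fin n →₀ ℕ) (L : MvPolynomial (Fin n) ℝ) (c : Fin n → ℝ)
    (hL : ∀ i, pderiv i L = C (c i)) (l : List (Fin n)) (m : ℕ) :
    l.foldr (fun i g => (pderiv i)^[α i] g) (L ^ m) =
      (((l.map fun i => c i ^ α i).prod) * (m.descFactorial (l.map α).sum : ℝ)) •
        L ^ (m - (l.map α).sum) := by
  induction l generalizing m with
  | nil => simp
  | cons i l ih =>
      rw [List.foldr_cons, ih, iterate_pderiv_smul, iterate_pderiv_pow i L (c i) (hL i),
        smul_smul, List.map_cons, List.map_cons, List.prod_cons, List.sum_cons]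
      have he : m - (List.map ⇑α l).sum - α i = m - (α i + (List.map ⇑α l).sum) := by omega
      rw [he, descFactorial_add' m (α i) ((l.map α).sum)]
      congr 1
      push_cast
      ring

lemma pderivPow_linear_pow (α : Fin n →₀ ℕ) (c : Fin n → ℝ) (d : ℕ)
    (hd : ∑ i, α i = d) :
    pderivPow α ((∑ i, C (c i) * X i) ^ d) =
      C ((∏ i, c i ^ α i) * (d.factorial : ℝ)) := by
  have hL : ∀ i, pderiv i (∑ k, C (c k) * X k) = C (c i) := by
    intro i
    simp [pderiv_X, Pi.single_apply, mul_ite, Finset.sum_ite_eq']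
  rw [pderivPow, foldr_pderiv_pow α _ c hL]
  rw [show ((List.finRange n).map α).sum = d from by
    rw [← hd, Fin.sum_univ_def]]
  rw [Nat.sub_self, pow_zero, Nat.descFactorial_self, smul_eq_C_mul, mul_one]
  rw [Fin.prod_univ_def]


lemma pderivPow_add (α : Fin n →₀ ℕ) (f g : MvPolynomial (Fin n) ℝ) :
    pderivPow α (f + g) = pderivPow α f + pderivPow α g := by
  unfold pderivPow
  induction List.finRange n generalizing f g with
  | nil => rfl
  | cons i l ih => simp only [List.foldr_cons, ih, iterate_pderiv_add]

lemma pderivPow_smul (α : Fin n →₀ ℕ) (a : ℝ) (f : MvPolynomial (Fin n) ℝ) :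
    pderivPow α (a • f) = a • pderivPow α f := by
  unfold pderivPow
  induction List.finRange n generalizing f with
  | nil => rfl
  | cons i l ih => simp only [List.foldr_cons, ih, iterate_pderiv_smul]

noncomputable def diffOpLM (s : MvPolynomial (Fin n) ℝ) :
    MvPolynomial (Fin n) ℝ →ₗ[ℝ] MvPolynomial (Fin n) ℝ where
  toFun := diffOp s
  map_add' f g := by
    unfold diffOp
    rw [← Finset.sum_add_distrib]
    exact Finset.sum_congr rfl fun α _ => by rw [pderivPow_add, smul_add]
  map_smul' a f := by
    unfold diffOp
    rw [RingHom.id_apply, Finset.smul_sum]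
    exact Finset.sum_congr rfl fun α _ => by rw [pderivPow_smul, smul_comm]

/-- Lemma B: `∂_s` applied to a `d`-th power of a linear form. -/
lemma diffOp_pow_linear (s : MvPolynomial (Fin n) ℝ) (d : ℕ) (hs : s.IsHomogeneous d)
    (c : Fin n → ℝ) :
    diffOp s ((∑ i, C (c i) * X i) ^ d) = C ((d.factorial : ℝ) * eval c s) := by
  unfold diffOp
  have h1 : ∀ α ∈ s.support,
      s.coeff α • pderivPow α ((∑ i, C (c i) * X i) ^ d) =
        C (s.coeff α * ((∏ i, c i ^ α i) * (d.factorial : ℝ))) := by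
    intro α hα
    have hd : ∑ i, α i = d := by
      have h2 := hs (mem_support_iff.1 hα)
      rw [← h2]
      simp [Finsupp.weight, Finsupp.linearCombination, Finsupp.sum_fintype]
    rw [pderivPow_linear_pow α c d hd, smul_eq_C_mul, ← C_mul]
  rw [Finset.sum_congr rfl h1, ← map_sum, eval_eq']
  rw [Finset.mul_sum]
  congr 1
  exact Finset.sum_congr rfl fun α _ => by ring

lemma extract_coeffs (N : ℕ) (A B : ℕ → MvPolynomial (Fin n) ℝ)
    (h : ∀ u : ℝ, ∑ k ∈ Finset.range N, u ^ k • A k = ∑ k ∈ Finset.range N, u ^ k • B k)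
    (k : ℕ) (hk : k < N) : A k = B k := by
  apply MvPolynomial.ext
  intro β
  set p : Polynomial ℝ :=
    ∑ m ∈ Finset.range N, Polynomial.C ((A m).coeff β) * Polynomial.X ^ m with hp
  set q : Polynomial ℝ :=
    ∑ m ∈ Finset.range N, Polynomial.C ((B m).coeff β) * Polynomial.X ^ m with hq
  have hpq : p = q := by
    apply Polynomial.funext
    intro u
    have h2 := congrArg (MvPolynomial.coeff β) (h u)
    simp only [MvPolynomial.coeff_sum, MvPolynomial.coeff_smul, smul_eq_mul] at h2
    simp only [hp, hq, Polynomial.eval_finset_sum, Polynomial.eval_mul, Polynomial.eval_C,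
      Polynomial.eval_pow, Polynomial.eval_X]
    calc ∑ m ∈ Finset.range N, (A m).coeff β * u ^ m
        = ∑ m ∈ Finset.range N, u ^ m * (A m).coeff β := by
          exact Finset.sum_congr rfl fun m _ => mul_comm _ _
      _ = ∑ m ∈ Finset.range N, u ^ m * (B m).coeff β := h2
      _ = ∑ m ∈ Finset.range N, (B m).coeff β * u ^ m := by
          exact Finset.sum_congr rfl fun m _ => mul_comm _ _
  have h3 := congrArg (fun r => Polynomial.coeff r k) hpq
  simpa [hp, hq, Polynomial.finset_sum_coeff, Polynomial.coeff_C_mul,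
    Polynomial.coeff_X_pow, Finset.sum_ite_eq' , hk] using h3

lemma natDegree_aeval_le (s : MvPolynomial (Fin n) ℝ) (d : ℕ) (hs : s.IsHomogeneous d)
    (t : Fin n → ℝ) :
    (MvPolynomial.aeval (fun i : Fin n => Polynomial.C (t i) + Polynomial.X) s).natDegree
      ≤ d := by
  conv_lhs => rw [as_sum s, map_sum]
  apply Polynomial.natDegree_sum_le_of_forall_le
  intro α hα
  rw [aeval_monomial]
  refine le_trans (Polynomial.natDegree_mul_le) ?_
  have h0 : (algebraMap ℝ (Polynomial ℝ) (s.coeff α)).natDegree = 0 :=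
    Polynomial.natDegree_C _
  rw [h0, zero_add]
  rw [Finsupp.prod]
  refine le_trans (Polynomial.natDegree_prod_le _ _) ?_
  have h2 : ∀ i ∈ α.support,
      ((Polynomial.C (t i) + Polynomial.X) ^ α i).natDegree ≤ α i := by
    intro i _
    refine le_trans Polynomial.natDegree_pow_le ?_
    have : (Polynomial.C (t i) + Polynomial.X).natDegree ≤ 1 :=
      le_trans (Polynomial.natDegree_add_le _ _) (by simp)
    calc α i * (Polynomial.C (t i) + Polynomial.X).natDegree ≤ α i * 1 :=
          Nat.mul_le_mul_left _ this
      _ = α i := Nat.mul_one _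
  refine le_trans (Finset.sum_le_sum h2) ?_
  have h3 := hs (mem_support_iff.1 hα)
  rw [← h3]
  simp [Finsupp.weight, Finsupp.linearCombination, Finsupp.sum]


/-- `∂_s ((Σᵢ xᵢ)^j (Σᵢ tᵢ xᵢ)^{d−j}) = j!·(d−j)!·s^{(j)}(t₁,…,tₙ)`. -/
theorem stmt_8 (s : MvPolynomial (Fin n) ℝ) (d : ℕ) (hs : s.IsHomogeneous d)
    (t : Fin n → ℝ) (j : ℕ) (hj : j ≤ d) :
    diffOp s ((∑ i, X i) ^ j * (∑ i, MvPolynomial.C (t i) * X i) ^ (d - j)) =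
      MvPolynomial.C ((j.factorial : ℝ) * ((d - j).factorial : ℝ) * derivedAt t s j) := by
  set L1 : MvPolynomial (Fin n) ℝ := ∑ i, X i with hL1
  set L2 : MvPolynomial (Fin n) ℝ := ∑ i, C (t i) * X i with hL2
  set q : Polynomial ℝ :=
    MvPolynomial.aeval (fun i : Fin n => Polynomial.C (t i) + Polynomial.X) s with hq
  have hdeg : q.natDegree < d + 1 := Nat.lt_succ_of_le (natDegree_aeval_le s d hs t)
  have key : ∀ u : ℝ,
      ∑ k ∈ Finset.range (d + 1),
          u ^ k • ((Nat.choose d k : ℝ) • diffOp s (L1 ^ k * L2 ^ (d - k))) =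
        ∑ k ∈ Finset.range (d + 1), u ^ k • (C ((d.factorial : ℝ) * q.coeff k)) := by
    intro u
    -- right side equals C (d! * eval (t + u) s)
    have he : eval (fun i => t i + u) s = Polynomial.eval u q := by
      have hcomp := congrFun (congrArg (fun (φ : _ →ₐ[ℝ] ℝ) => (φ : MvPolynomial (Fin n) ℝ → ℝ))
        (MvPolynomial.comp_aeval (R := ℝ)
          (f := fun i : Fin n => Polynomial.C (t i) + Polynomial.X)
          (Polynomial.aeval u))) s
      simp only [AlgHom.coe_comp, Function.comp_apply, map_add, Polynomial.aeval_C,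
        Polynomial.aeval_X] at hcomp
      rw [← Polynomial.coe_aeval_eq_eval, hcomp,
        show (fun i => algebraMap ℝ ℝ (t i) + u) = (fun i => t i + u) from rfl]
      exact ((MvPolynomial.aeval_def _ s).trans rfl).symm
    have hR : (C ((d.factorial : ℝ) * eval (fun i => t i + u) s) : MvPolynomial (Fin n) ℝ) =
        ∑ k ∈ Finset.range (d + 1), u ^ k • (C ((d.factorial : ℝ) * q.coeff k)) := by
      rw [he, Polynomial.eval_eq_sum_range' hdeg, Finset.mul_sum, map_sum]
      refine Finset.sum_congr rfl fun k _ => ?_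
      rw [smul_eq_C_mul, ← C_mul]
      congr 1
      ring
    -- left side
    have hLc : (∑ i, C (t i + u) * X i) = C u * L1 + L2 := by
      simp only [C_add, add_mul, Finset.sum_add_distrib, hL1, hL2, Finset.mul_sum]
      ring
    have h0 := diffOp_pow_linear s d hs (fun i => t i + u)
    rw [hLc, add_pow] at h0
    have hterm : ∀ k, (C u * L1) ^ k * L2 ^ (d - k) * ((Nat.choose d k : ℕ) : MvPolynomial (Fin n) ℝ)
        = (u ^ k : ℝ) • ((Nat.choose d k : ℝ) • (L1 ^ k * L2 ^ (d - k))) := by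
      intro k
      rw [mul_pow, smul_smul, smul_eq_C_mul, C_mul, ← C_pow, map_natCast C (d.choose k)]
      ring
    rw [← hR, ← h0]
    rw [Finset.sum_congr rfl fun k _ => hterm k]
    have hD : ∀ x, diffOp s x = diffOpLM s x := fun _ => rfl
    rw [hD, map_sum]
    refine Finset.sum_congr rfl fun k _ => ?_
    rw [map_smul, map_smul, hD]
  have hj2 := extract_coeffs (d + 1)
    (fun k => (Nat.choose d k : ℝ) • diffOp s (L1 ^ k * L2 ^ (d - k)))
    (fun k => C ((d.factorial : ℝ) * q.coeff k)) key j (by omega)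
  have hc : (Nat.choose d j : ℝ) ≠ 0 := by
    exact_mod_cast (Nat.choose_pos hj).ne'
  have hmain : diffOp s (L1 ^ j * L2 ^ (d - j)) =
      (Nat.choose d j : ℝ)⁻¹ • C ((d.factorial : ℝ) * q.coeff j) := by
    rw [← hj2, inv_smul_smul₀ hc]
  rw [hmain, smul_eq_C_mul, ← C_mul]
  congr 1
  have hfac : (Nat.choose d j : ℝ) * ((j.factorial : ℝ) * ((d - j).factorial : ℝ)) =
      (d.factorial : ℝ) := by
    exact_mod_cast congrArg (Nat.cast (R := ℝ))
      (by rw [← Nat.choose_mul_factorial_mul_factorial hj]; ring)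
  have : derivedAt t s j = q.coeff j := rfl
  rw [this, ← hfac, mul_assoc ((d.choose j : ℝ)), inv_mul_cancel_left₀ hc]
end

section
/- Let f be a Lorentzian polynomial of degree d in x_1,...,x_n, fix an index i and m ∈ ℕ, and let f̄ = Σ_{α: α_i ≤ m} λ_α x^α be its truncation. Then for every multi-index α of degree d−2, the quadratic form ∂^α f̄ has at most one positive eigenvalue. -/
open MvPolynomial

variable {n : ℕ}

/-- A real matrix has at most one positive eigenvalue (counted with multiplicity). -/
def AtMostOnePos {m : ℕ} (A : Matrix (Fin m) (Fin m) ℝ) : Prop :=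
  ∀ hA : A.IsHermitian, (Finset.univ.filter fun i => 0 < hA.eigenvalues i).card ≤ 1

/-- The (constant) Hessian matrix of a polynomial, representing it as a quadratic form
when it is quadratic. -/
noncomputable def hessian (f : MvPolynomial (Fin n) ℝ) : Matrix (Fin n) (Fin n) ℝ :=
  fun i j => MvPolynomial.coeff 0 (pderiv i (pderiv j f))

/-- M-convexity of a set of multi-indices. -/
def MConvexSupp (C : Set (Fin n →₀ ℕ)) : Prop :=
  ∀ α ∈ C, ∀ β ∈ C, ∀ j : Fin n, β j < α j →
    ∃ k : Fin n, α k < β k ∧ α - Finsupp.single j 1 + Finsupp.single k 1 ∈ C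

/-- `f` is Lorentzian of degree `d`: homogeneous of degree `d` with non-negative
coefficients, and if `d ≥ 2`, its support is M-convex and every `(d−2)`-fold partial
derivative is a quadratic form with at most one positive eigenvalue. -/
def Lorentzian (d : ℕ) (f : MvPolynomial (Fin n) ℝ) : Prop :=
  f.IsHomogeneous d ∧ (∀ α, 0 ≤ f.coeff α) ∧
  (2 ≤ d → MConvexSupp {α | f.coeff α ≠ 0} ∧
    ∀ α : Fin n →₀ ℕ, (α.sum fun _ k => k) = d - 2 →
      AtMostOnePos (hessian (pderivPow α f)))

/-- `f` is Lorentzian (of some degree). -/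
def IsLorentzian (f : MvPolynomial (Fin n) ℝ) : Prop := ∃ d, Lorentzian d f

/-- The truncation keeping only monomials whose exponent of `xᵢ` is at most `m`. -/
noncomputable def truncVarLE (i : Fin n) (m : ℕ) (f : MvPolynomial (Fin n) ℝ) :
    MvPolynomial (Fin n) ℝ :=
  ∑ β ∈ f.support.filter (fun β => β i ≤ m), monomial β (f.coeff β)

/-! The entry `(j, k)` of the Hessian of `∂^α f̄` is that of `∂^α f` when `x^(α + e_j + e_k)`
survives the truncation, and `0` otherwise. Hence, according to `m - α_i`, the Hessian of
`∂^α f̄` is the Hessian `A` of `∂^α f`, or `A` without its (non-negative) entry `A_ii`, or `A`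
restricted to `x_i = 0`, or `0`. A symmetric matrix has at most one positive eigenvalue iff its
quadratic form is non-positive on some hyperplane, and each of these four operations preserves
that property. -/

open Matrix

section QuadraticForm

variable {ι : Type*} [Fintype ι]

def NonposOnHyperplane (A : Matrix ι ι ℝ) : Prop :=
  ∃ φ : (ι → ℝ) →ₗ[ℝ] ℝ, ∀ x, φ x = 0 → x ⬝ᵥ A *ᵥ x ≤ 0

namespace Matrix.IsHermitian

variable [DecidableEq ι] {A : Matrix ι ι ℝ} (hA : A.IsHermitian)

theorem dotProduct_mulVec_eq_sum_eigenvalues (x : ι → ℝ) :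
    x ⬝ᵥ A *ᵥ x = ∑ t, hA.eigenvalues t *
      ((star (hA.eigenvectorUnitary : Matrix ι ι ℝ) *ᵥ x) t) ^ 2 := by
  set U := (hA.eigenvectorUnitary : Matrix ι ι ℝ)
  have hAx : A *ᵥ x = U *ᵥ (diagonal hA.eigenvalues *ᵥ (star U *ᵥ x)) := by
    conv_lhs => rw [hA.spectral_theorem]
    rw [Unitary.conjStarAlgAut_apply, ← mulVec_mulVec, ← mulVec_mulVec]
    rfl
  have hxU : x ᵥ* U = star U *ᵥ x := by
    rw [star_eq_conjTranspose, conjTranspose_eq_transpose_of_trivial, mulVec_transpose]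
  rw [hAx, dotProduct_mulVec, hxU]
  simp only [mulVec_diagonal, dotProduct]
  exact Finset.sum_congr rfl fun t _ => by ring

theorem dotProduct_mulVec_eigenvectorBasis {j k : ι} (hjk : j ≠ k) (a b : ℝ) :
    (a • ⇑(hA.eigenvectorBasis j) + b • ⇑(hA.eigenvectorBasis k)) ⬝ᵥ
      A *ᵥ (a • ⇑(hA.eigenvectorBasis j) + b • ⇑(hA.eigenvectorBasis k)) =
      hA.eigenvalues j * a ^ 2 + hA.eigenvalues k * b ^ 2 := by
  have hcoord : star (hA.eigenvectorUnitary : Matrix ι ι ℝ) *ᵥ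
      (a • ⇑(hA.eigenvectorBasis j) + b • ⇑(hA.eigenvectorBasis k)) =
      a • Pi.single j 1 + b • Pi.single k 1 := by
    simp only [mulVec_add, mulVec_smul, star_eigenvectorUnitary_mulVec]
  rw [dotProduct_mulVec_eq_sum_eigenvalues hA, hcoord,
    Finset.sum_eq_add_of_mem j k (Finset.mem_univ j) (Finset.mem_univ k) hjk]
  · simp [hjk, hjk.symm]
  · intro t _ ht
    simp [ht.1, ht.2]

theorem nonposOnHyperplane (h : (Finset.univ.filter fun t => 0 < hA.eigenvalues t).card ≤ 1) :
    NonposOnHyperplane A := by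
  set S := Finset.univ.filter fun t => 0 < hA.eigenvalues t
  set y := Matrix.mulVecLin (star (hA.eigenvectorUnitary : Matrix ι ι ℝ))
  -- `φ` is the coordinate along the unique positive eigenvector, if there is one.
  refine ⟨∑ t ∈ S, (LinearMap.proj t).comp y, fun x hx => ?_⟩
  rw [dotProduct_mulVec_eq_sum_eigenvalues hA]
  refine Finset.sum_nonpos fun t _ => ?_
  by_cases ht : t ∈ S
  · have hS : S = {t} := Finset.eq_singleton_iff_unique_mem.mpr
      ⟨ht, fun s hs => Finset.card_le_one.mp h s hs t ht⟩
    simp only [hS, Finset.sum_singleton, LinearMap.coe_comp, LinearMap.coe_proj,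
      Function.comp_apply, Function.eval, mulVecBilin_apply, y] at hx
    simp [hx]
  · have hnonpos : hA.eigenvalues t ≤ 0 := by simpa [S] using ht
    exact mul_nonpos_of_nonpos_of_nonneg hnonpos (sq_nonneg _)

theorem card_filter_pos_le_one (h : NonposOnHyperplane A) :
    (Finset.univ.filter fun t => 0 < hA.eigenvalues t).card ≤ 1 := by
  obtain ⟨φ, hφ⟩ := h
  by_contra! hcard
  obtain ⟨j, hj, k, hk, hjk⟩ := Finset.one_lt_card.mp hcard
  simp only [Finset.mem_filter, Finset.mem_univ, true_and] at hj hk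
  set u := ⇑(hA.eigenvectorBasis j)
  set v := ⇑(hA.eigenvectorBasis k)
  by_cases hu : φ u = 0
  · have hQ := dotProduct_mulVec_eigenvectorBasis hA hjk 1 0
    simp only [one_smul, zero_smul, add_zero, one_pow, mul_one, ne_eq, OfNat.ofNat_ne_zero,
      not_false_eq_true, zero_pow, mul_zero] at hQ
    linarith [hφ u hu]
  · -- `φ u • v - φ v • u` lies in `ker φ`, yet the form is positive there.
    have hQ := dotProduct_mulVec_eigenvectorBasis hA hjk (-φ v) (φ u)
    have hker := hφ ((-φ v) • u + φ u • v) (by simp [u, v]; ring)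
    have hpos : 0 < hA.eigenvalues k * φ u ^ 2 := by positivity
    nlinarith [sq_nonneg (φ v)]

end Matrix.IsHermitian

theorem atMostOnePos_iff {N : ℕ} {A : Matrix (Fin N) (Fin N) ℝ} (hA : A.IsHermitian) :
    AtMostOnePos A ↔ NonposOnHyperplane A :=
  ⟨fun h => hA.nonposOnHyperplane (h hA), fun h hA' => hA'.card_filter_pos_le_one h⟩

namespace NonposOnHyperplane

variable {A B : Matrix ι ι ℝ}

theorem mono (h : NonposOnHyperplane A) (hBA : ∀ x, x ⬝ᵥ B *ᵥ x ≤ x ⬝ᵥ A *ᵥ x) :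
    NonposOnHyperplane B :=
  let ⟨φ, hφ⟩ := h
  ⟨φ, fun x hx => (hBA x).trans (hφ x hx)⟩

theorem transpose_mul_mul {κ : Type*} [Fintype κ] (h : NonposOnHyperplane A) (P : Matrix ι κ ℝ) :
    NonposOnHyperplane (Pᵀ * A * P) := by
  obtain ⟨φ, hφ⟩ := h
  refine ⟨φ ∘ₗ P.mulVecLin, fun x hx => ?_⟩
  rw [← mulVec_mulVec, ← mulVec_mulVec, dotProduct_transpose_mulVec, dotProduct_comm]
  exact hφ _ hx

theorem of_eq_ite [DecidableEq ι] (h : NonposOnHyperplane A) (i : ι) (hAii : 0 ≤ A i i)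
    (a m : ℕ) (hB : ∀ j k, B j k =
      if (if j = i then 1 else 0) + (if k = i then 1 else 0) + a ≤ m then A j k else 0) :
    NonposOnHyperplane B := by
  obtain h2 | h1 | h0 | hneg : a + 2 ≤ m ∨ a + 1 = m ∨ a = m ∨ m < a := by omega
  · convert h
    ext j k
    rw [hB, if_pos (by split_ifs <;> omega)]
  · refine h.mono fun x => ?_
    have hB' : B = A - Matrix.single i i (A i i) := by
      ext j k
      rw [hB, Matrix.sub_apply, single_apply]
      split_ifs <;> grind
    rw [hB', sub_mulVec, dotProduct_sub, single_mulVec, ← Pi.single, dotProduct_single]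
    nlinarith [mul_self_nonneg (x i)]
  · convert h.transpose_mul_mul (diagonal fun t => if t = i then 0 else 1)
    ext j k
    rw [hB, diagonal_transpose, mul_diagonal, diagonal_mul]
    split_ifs <;> grind
  · convert h.transpose_mul_mul (0 : Matrix ι ι ℝ)
    ext j k
    rw [hB, if_neg (by omega)]
    simp

end NonposOnHyperplane

end QuadraticForm

theorem coeff_iterate_pderiv {σ : Type*} (i : σ) (k : ℕ) (p : MvPolynomial σ ℝ) (β : σ →₀ ℕ) :
    coeff β ((pderiv i)^[k] p) =
      coeff (β + Finsupp.single i k) p * (β i + k).descFactorial k := by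
  induction k generalizing p with
  | zero => simp
  | succ k ih =>
    rw [Function.iterate_succ_apply, ih, coeff_pderiv, add_assoc, ← Finsupp.single_add,
      Finsupp.add_apply, Finsupp.single_eq_same, ← add_assoc, Nat.succ_descFactorial_succ]
    push_cast
    ring

theorem coeff_foldr_iterate_pderiv (α β : Fin n →₀ ℕ) (p : MvPolynomial (Fin n) ℝ)
    {L : List (Fin n)} (hL : L.Nodup) :
    coeff β (L.foldr (fun i g => (pderiv i)^[α i] g) p) =
      coeff (β + ∑ t ∈ L.toFinset, Finsupp.single t (α t)) p *
        ∏ t ∈ L.toFinset, ((β t + α t).descFactorial (α t) : ℝ) := by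
  induction L generalizing β with
  | nil => simp
  | cons i L ih =>
    obtain ⟨hiL, hL⟩ := List.nodup_cons.mp hL
    have hiL' : i ∉ L.toFinset := by simpa using hiL
    have hβ : ∀ t ∈ L.toFinset, (β + Finsupp.single i (α i)) t = β t := fun t ht => by
      rw [Finsupp.add_apply, Finsupp.single_eq_of_ne (by rintro rfl; exact hiL' ht), add_zero]
    rw [List.foldr_cons, coeff_iterate_pderiv, ih _ hL, Finset.prod_congr rfl fun t ht => by
      rw [hβ t ht], List.toFinset_cons, Finset.sum_insert hiL', Finset.prod_insert hiL',
      add_assoc]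
    ring

theorem coeff_pderivPow (α β : Fin n →₀ ℕ) (p : MvPolynomial (Fin n) ℝ) :
    coeff β (pderivPow α p) =
      coeff (β + α) p * ∏ t, ((β t + α t).descFactorial (α t) : ℝ) := by
  rw [pderivPow, coeff_foldr_iterate_pderiv α β p (List.nodup_finRange n),
    List.toFinset_finRange, Finsupp.univ_sum_single]

theorem hessian_apply (q : MvPolynomial (Fin n) ℝ) (j k : Fin n) :
    hessian q j k =
      coeff (Finsupp.single j 1 + Finsupp.single k 1) q * if j = k then 2 else 1 := by
  simp only [hessian, coeff_pderiv, zero_add, Finsupp.coe_zero, Pi.zero_apply, Nat.cast_zero,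
    Finsupp.single_apply]
  split_ifs <;> norm_num

theorem hessian_isHermitian (q : MvPolynomial (Fin n) ℝ) : (hessian q).IsHermitian := by
  ext j k
  simp only [conjTranspose_apply, star_trivial, hessian_apply, add_comm, eq_comm]

theorem hessian_pderivPow_nonneg (α : Fin n →₀ ℕ) {p : MvPolynomial (Fin n) ℝ}
    (hp : ∀ β, 0 ≤ coeff β p) (j k : Fin n) : 0 ≤ hessian (pderivPow α p) j k := by
  rw [hessian_apply, coeff_pderivPow]
  exact mul_nonneg (mul_nonneg (hp _) (by positivity)) (by split_ifs <;> norm_num)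

theorem coeff_truncVarLE (i : Fin n) (m : ℕ) (f : MvPolynomial (Fin n) ℝ) (β : Fin n →₀ ℕ) :
    coeff β (truncVarLE i m f) = if β i ≤ m then coeff β f else 0 := by
  simp only [truncVarLE, coeff_sum, coeff_monomial, Finset.sum_ite_eq', Finset.mem_filter,
    mem_support_iff]
  split_ifs <;> simp_all

theorem coeff_pderivPow_truncVarLE (α β : Fin n →₀ ℕ) (i : Fin n) (m : ℕ)
    (f : MvPolynomial (Fin n) ℝ) :
    coeff β (pderivPow α (truncVarLE i m f)) =
      if β i + α i ≤ m then coeff β (pderivPow α f) else 0 := by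
  rw [coeff_pderivPow, coeff_pderivPow, coeff_truncVarLE, Finsupp.add_apply]
  split_ifs <;> simp

theorem hessian_pderivPow_truncVarLE (α : Fin n →₀ ℕ) (i : Fin n) (m : ℕ)
    (f : MvPolynomial (Fin n) ℝ) (j k : Fin n) :
    hessian (pderivPow α (truncVarLE i m f)) j k =
      if (if j = i then 1 else 0) + (if k = i then 1 else 0) + α i ≤ m then
        hessian (pderivPow α f) j k else 0 := by
  rw [hessian_apply, hessian_apply, coeff_pderivPow_truncVarLE, Finsupp.add_apply,
    Finsupp.single_apply, Finsupp.single_apply]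
  split_ifs <;> simp

/-- If `f` is Lorentzian of degree `d ≥ 2`, then every `(d−2)`-fold partial derivative
of the truncation `f̄ = Σ_{α_i ≤ m} λ_α x^α` is a quadratic form with at most one
positive eigenvalue. -/
theorem stmt_13 (f : MvPolynomial (Fin n) ℝ) (d : ℕ) (hd : 2 ≤ d)
    (hf : Lorentzian d f) (i : Fin n) (m : ℕ) :
    ∀ α : Fin n →₀ ℕ, (α.sum fun _ k => k) = d - 2 →
      AtMostOnePos (hessian (pderivPow α (truncVarLE i m f))) := by
  intro α hα
  obtain ⟨-, hcoeff, hdeg⟩ := hf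
  have hA := (hdeg hd).2 α hα
  rw [atMostOnePos_iff (hessian_isHermitian _)] at hA ⊢
  exact hA.of_eq_ite i (hessian_pderivPow_nonneg α hcoeff i i) (α i) m
    (hessian_pderivPow_truncVarLE α i m f)
end
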